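/- arXiv:1609.05176 — 3 statements merged into one kernel-verified Lean document; each statement's English description precedes it below -/
import Mathlib

section
/- Let k be a field, n a positive integer, F = k((t)) the field of formal Laurent series over k with normalized valuation v (so v(t) = 1), and O = k⟦t⟧ its valuation ring. For an n×n matrix A with entries in F the following are equivalent: (a) the powers A^m converge to 0, i.e. for every N there exists m₀ such that for all m ≥ m₀ every entry of A^m has valuation at least N; (b) there exists g ∈ GL_n(F) such that all entries of g·A·g⁻¹ lie in O and the reduction of g·A·g⁻¹ modulo t is a nilpotent n×n matrix over k. -/
namespace Lem21
variable {k : Type*} [Field k]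

lemma coeff_mul_eq_zero {x y : LaurentSeries k} {a b : ℤ}
    (hx : ∀ d, d < a → x.coeff d = 0) (hy : ∀ d, d < b → y.coeff d = 0) :
    ∀ d, d < a + b → (x * y).coeff d = 0 := by
  intro d hd
  rw [HahnSeries.coeff_mul]
  refine Finset.sum_eq_zero fun ij hij => ?_
  rw [Finset.mem_addAntidiagonal] at hij
  rcases lt_or_ge ij.1 a with h | h
  · rw [hx _ h, zero_mul]
  · have : ij.2 < b := by have := hij.2.2; omega
    rw [hy _ this, mul_zero]

lemma matmul_vanish {n : ℕ} {M N : Matrix (Fin n) (Fin n) (LaurentSeries k)} {a b : ℤ}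
    (hM : ∀ i j, ∀ d, d < a → (M i j).coeff d = 0)
    (hN : ∀ i j, ∀ d, d < b → (N i j).coeff d = 0) :
    ∀ i j, ∀ d, d < a + b → ((M * N) i j).coeff d = 0 := by
  intro i j d hd
  rw [Matrix.mul_apply]
  have hsum : (∑ l : Fin n, M i l * N l j).coeff d = ∑ l : Fin n, (M i l * N l j).coeff d :=
    map_sum (HahnSeries.coeff.addMonoidHom d) (fun l => M i l * N l j) Finset.univ
  rw [hsum]
  exact Finset.sum_eq_zero fun l _ => coeff_mul_eq_zero (hM i l) (hN l j) d hd

lemma one_vanish {n : ℕ} : ∀ i j : Fin n, ∀ d : ℤ, d < 0 →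
    ((1 : Matrix (Fin n) (Fin n) (LaurentSeries k)) i j).coeff d = 0 := by
  intro i j d hd
  rw [Matrix.one_apply]
  split
  · rw [HahnSeries.coeff_one, if_neg (by omega)]
  · simp

lemma pow_vanish {n : ℕ} {M : Matrix (Fin n) (Fin n) (LaurentSeries k)}
    (hM : ∀ i j, ∀ d, d < 0 → (M i j).coeff d = 0) (m : ℕ) :
    ∀ i j, ∀ d, d < 0 → ((M ^ m) i j).coeff d = 0 := by
  induction m with
  | zero => simpa using one_vanish
  | succ m ih =>
      rw [pow_succ]
      simpa using matmul_vanish ih hM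

lemma matrix_exists_bound {n : ℕ} (M : Matrix (Fin n) (Fin n) (LaurentSeries k)) :
    ∃ s : ℤ, s ≤ 0 ∧ ∀ i j, ∀ d, d < s → (M i j).coeff d = 0 := by
  cases isEmpty_or_nonempty (Fin n) with
  | inl h => exact ⟨0, le_refl _, fun i => h.elim i⟩
  | inr h =>
      refine ⟨min 0 (Finset.univ.inf' (Finset.univ_nonempty)
        (fun p : Fin n × Fin n => (M p.1 p.2).order)), min_le_left _ _, ?_⟩
      intro i j d hd
      refine HahnSeries.coeff_eq_zero_of_lt_order (lt_of_lt_of_le hd ?_)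
      exact le_trans (min_le_right _ _) (Finset.inf'_le _ (Finset.mem_univ (i, j)))

lemma pows_exists_bound {n : ℕ} (A : Matrix (Fin n) (Fin n) (LaurentSeries k)) (M₀ : ℕ) :
    ∃ s : ℤ, s ≤ 0 ∧ ∀ m, m < M₀ → ∀ i j, ∀ d, d < s → ((A ^ m) i j).coeff d = 0 := by
  induction M₀ with
  | zero => exact ⟨0, le_refl _, fun m hm => absurd hm (by omega)⟩
  | succ M ih =>
      obtain ⟨s, hs0, hs⟩ := ih
      obtain ⟨s', hs'0, hs'⟩ := matrix_exists_bound (A ^ M)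
      refine ⟨min s s', le_trans (min_le_left _ _) hs0, ?_⟩
      intro m hm i j d hd
      rcases lt_or_ge m M with h | h
      · exact hs m h i j d (lt_of_lt_of_le hd (min_le_left _ _))
      · have : m = M := by omega
        subst this
        exact hs' i j d (lt_of_lt_of_le hd (min_le_right _ _))

lemma exists_powerSeries {x : LaurentSeries k} (hx : ∀ d : ℤ, d < 0 → x.coeff d = 0) :
    ∃ f : PowerSeries k, (HahnSeries.ofPowerSeries ℤ k) f = x := by
  refine ⟨PowerSeries.mk fun m => x.coeff m, ?_⟩
  ext d
  rw [show ((HahnSeries.ofPowerSeries ℤ k) (PowerSeries.mk fun m => x.coeff (m : ℤ))) =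
    ((PowerSeries.mk fun m => x.coeff (m : ℤ) : PowerSeries k) : LaurentSeries k) from rfl,
    PowerSeries.coeff_coe]
  split
  · rw [hx d (by omega)]
  · rw [PowerSeries.coeff_mk]
    congr 1
    omega

lemma coeff_zero_coe (f : PowerSeries k) :
    ((HahnSeries.ofPowerSeries ℤ k) f).coeff 0 = PowerSeries.constantCoeff (R := k) f := by
  rw [show ((HahnSeries.ofPowerSeries ℤ k) f) = ((f : PowerSeries k) : LaurentSeries k) from rfl,
    PowerSeries.coeff_coe]
  simp [PowerSeries.coeff_zero_eq_constantCoeff]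

lemma neg_coeff_coe (f : PowerSeries k) {d : ℤ} (hd : d < 0) :
    ((HahnSeries.ofPowerSeries ℤ k) f).coeff d = 0 := by
  rw [show ((HahnSeries.ofPowerSeries ℤ k) f) = ((f : PowerSeries k) : LaurentSeries k) from rfl,
    PowerSeries.coeff_coe, if_pos hd]

lemma reduction_pow {n : ℕ} {M : Matrix (Fin n) (Fin n) (LaurentSeries k)}
    (hM : ∀ i j, ∀ d : ℤ, d < 0 → (M i j).coeff d = 0) (m : ℕ) :
    (M.map (fun x => x.coeff 0)) ^ m = (M ^ m).map (fun x => x.coeff 0) := by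
  choose C hC using fun p : Fin n × Fin n => exists_powerSeries (fun d hd => hM p.1 p.2 d hd)
  set ι := HahnSeries.ofPowerSeries ℤ k with hι
  set Cm : Matrix (Fin n) (Fin n) (PowerSeries k) := Matrix.of fun i j => C (i, j) with hCm
  have hM' : M = Cm.map ι := by
    ext i j
    simp [hCm, hC (i, j)]
  have h1 : ∀ l : ℕ, M ^ l = (Cm ^ l).map ι := by
    intro l
    rw [hM']
    have := map_pow ((RingHom.mapMatrix ι : Matrix (Fin n) (Fin n) (PowerSeries k) →+* _)) Cm l
    simpa [RingHom.mapMatrix_apply] using this.symm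
  have h2 : ∀ l : ℕ, (M ^ l).map (fun x => x.coeff 0) =
      (Cm ^ l).map (PowerSeries.constantCoeff (R := k)) := by
    intro l
    rw [h1 l]
    ext i j
    simp only [Matrix.map_apply]
    exact coeff_zero_coe _
  rw [h2 m]
  have h3 : M.map (fun x => x.coeff 0) = Cm.map (PowerSeries.constantCoeff (R := k)) := by
    simpa using h2 1
  rw [h3]
  have := map_pow ((RingHom.mapMatrix (PowerSeries.constantCoeff (R := k)) : Matrix (Fin n) (Fin n) (PowerSeries k) →+* _)) Cm m
  simpa [RingHom.mapMatrix_apply] using this.symm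

lemma dir_ba {n : ℕ} (hn : 0 < n) (A P Q : Matrix (Fin n) (Fin n) (LaurentSeries k))
    (hPQ : P * Q = 1) (hQP : Q * P = 1)
    (hInt : ∀ i j, ∀ d : ℤ, d < 0 → ((P * A * Q) i j).coeff d = 0)
    (hNil : IsNilpotent ((P * A * Q).map (fun x => x.coeff 0))) :
    ∀ N : ℤ, ∃ m₀ : ℕ, ∀ m, m₀ ≤ m → ∀ i j, ∀ d : ℤ, d < N → ((A ^ m) i j).coeff d = 0 := by
  obtain ⟨e, he⟩ := hNil
  set B := P * A * Q with hB
  have hA : ∀ m : ℕ, A ^ m = Q * B ^ m * P := by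
    intro m
    induction m with
    | zero => simp [hQP]
    | succ m ih =>
        rw [pow_succ, ih, pow_succ, hB]
        simp only [Matrix.mul_assoc, hQP, Matrix.mul_one]
  have hBInt : ∀ i j, ∀ d : ℤ, d < 0 → (B i j).coeff d = 0 := hInt
  have hBe : ∀ i j, ∀ d : ℤ, d < 1 → ((B ^ e) i j).coeff d = 0 := by
    intro i j d hd
    rcases lt_or_ge d 0 with hlt | hge
    · exact pow_vanish hBInt e i j d hlt
    · have hd0 : d = 0 := by omega
      subst hd0
      have hred := reduction_pow hBInt e
      rw [he] at hred
      have h2 := congrFun (congrFun hred.symm i) j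
      simpa [Matrix.map_apply] using h2
  have hBq : ∀ q : ℕ, ∀ i j, ∀ d : ℤ, d < (q : ℤ) → ((B ^ (e * q)) i j).coeff d = 0 := by
    intro q
    induction q with
    | zero =>
        intro i j d hd
        exact pow_vanish hBInt (e * 0) i j d (by exact_mod_cast hd)
    | succ q ih =>
        intro i j d hd
        have hpow : B ^ (e * (q + 1)) = B ^ (e * q) * B ^ e := by
          rw [← pow_add]
          ring_nf
        rw [hpow]
        exact matmul_vanish ih hBe i j d (by push_cast at hd ⊢; omega)
  obtain ⟨s₁, hs₁0, hs₁⟩ := matrix_exists_bound P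
  obtain ⟨s₂, hs₂0, hs₂⟩ := matrix_exists_bound Q
  intro N
  set q : ℕ := (N - s₁ - s₂).toNat with hq
  refine ⟨e * q, ?_⟩
  intro m hm i j d hd
  rw [hA m]
  have hBm : ∀ i j, ∀ dd : ℤ, dd < (q : ℤ) → ((B ^ m) i j).coeff dd = 0 := by
    intro i' j' dd hdd
    have hsplit : B ^ m = B ^ (e * q) * B ^ (m - e * q) := by
      rw [← pow_add]
      congr 1
      omega
    rw [hsplit]
    have := matmul_vanish (a := (q : ℤ)) (b := 0) (hBq q) (pow_vanish hBInt (m - e * q))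
    exact this i' j' dd (by omega)
  have h1 := matmul_vanish (a := s₂) (b := (q : ℤ)) hs₂ hBm
  have h2 := matmul_vanish (a := s₂ + (q : ℤ)) (b := s₁) h1 hs₁
  refine h2 i j d ?_
  have hqge : (N - s₁ - s₂ : ℤ) ≤ (q : ℤ) := by
    rw [hq]
    exact Int.self_le_toNat _
  omega

set_option maxHeartbeats 1000000 in
set_option synthInstance.maxHeartbeats 400000 in
lemma dir_ab {n : ℕ} (hn : 0 < n) (A : Matrix (Fin n) (Fin n) (LaurentSeries k))
    (h : ∀ N : ℤ, ∃ m₀ : ℕ, ∀ m, m₀ ≤ m → ∀ i j, ∀ d : ℤ, d < N → ((A ^ m) i j).coeff d = 0) :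
    ∃ H : Matrix (Fin n) (Fin n) (LaurentSeries k), IsUnit H ∧
      (∀ i j, ∀ d : ℤ, d < 0 → ((H⁻¹ * A * H) i j).coeff d = 0) ∧
      IsNilpotent ((H⁻¹ * A * H).map (fun x => x.coeff 0)) := by
  classical
  obtain ⟨m₀', h₀⟩ := h 0
  set M₀ : ℕ := max m₀' 1 with hM₀def
  set ι := HahnSeries.ofPowerSeries ℤ k with hιdef
  have hsmul : ∀ (c : PowerSeries k) (y : LaurentSeries k), c • y = ι c * y := by
    intro c y
    rw [Algebra.smul_def, hιdef, LaurentSeries.coe_algebraMap]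
  have hVsmul : ∀ (c : PowerSeries k) (x : Fin n → LaurentSeries k) (l : Fin n),
      (c • x) l = ι c * x l := by
    intro c x l
    rw [Pi.smul_apply, hsmul]
  have hOsmul : ∀ (c : PowerSeries k) (w : Fin n → PowerSeries k) (l : Fin n),
      (c • w) l = c * w l := by
    intro c w l
    rw [Pi.smul_apply, smul_eq_mul]
  set ψ : (Fin n → PowerSeries k) →ₗ[PowerSeries k] (Fin n → LaurentSeries k) :=
    LinearMap.compLeft (Algebra.linearMap (PowerSeries k) (LaurentSeries k)) (Fin n) with hψdef
  have hψapp : ∀ (w : Fin n → PowerSeries k) (l : Fin n), ψ w l = ι (w l) := fun w l => rfl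
  have hιinj : Function.Injective ι := HahnSeries.ofPowerSeries_injective
  have hψinj : Function.Injective ψ := by
    intro w w' hh
    funext l
    exact hιinj (by rw [← hψapp, ← hψapp, hh])
  obtain ⟨s, hs0, hs⟩ := pows_exists_bound A M₀
  set r : ℕ := (-s).toNat with hrdef
  have hrs : -(r : ℤ) ≤ s := by
    have := Int.self_le_toNat (-s)
    omega
  set S : Set (Fin n → LaurentSeries k) :=
    {v | ∃ m : ℕ, m < M₀ ∧ ∃ i : Fin n, v = fun j => (A ^ m) j i} with hSdef
  set Λ : Submodule (PowerSeries k) (Fin n → LaurentSeries k) :=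
    Submodule.span (PowerSeries k) S with hΛdef
  have hstab : ∀ v ∈ Λ, A.mulVec v ∈ Λ := by
    intro v hv
    induction hv using Submodule.span_induction with
    | mem x hx =>
        obtain ⟨m, hm, i, rfl⟩ := hx
        have hcol : A.mulVec (fun j => (A ^ m) j i) = fun j => (A ^ (m + 1)) j i := by
          funext j
          rw [pow_succ']
          simp [Matrix.mulVec, Matrix.mul_apply, dotProduct]
        rw [hcol]
        rcases lt_or_ge (m + 1) M₀ with hlt | hge
        · exact Submodule.subset_span ⟨m + 1, hlt, i, rfl⟩
        · have hint : ∀ p, ∀ d : ℤ, d < 0 → ((A ^ (m + 1)) p i).coeff d = 0 := by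
            intro p d hd
            exact h₀ (m + 1) (le_trans (le_max_left _ _) hge) p i d hd
          choose C hC using fun p : Fin n => exists_powerSeries (fun d hd => hint p d hd)
          have hv2 : (fun j => (A ^ (m + 1)) j i) =
              ∑ p : Fin n, C p • (fun l => (A ^ 0) l p : Fin n → LaurentSeries k) := by
            funext l
            rw [Finset.sum_apply]
            simp only [Pi.smul_apply, pow_zero, Matrix.one_apply, hsmul, mul_ite, mul_one,
              mul_zero]
            rw [Finset.sum_ite_eq]
            simp [hC, hιdef]
          rw [hv2]
          exact Submodule.sum_mem _ fun p _ =>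
            Submodule.smul_mem _ _ (Submodule.subset_span ⟨0, by omega, p, rfl⟩)
    | zero =>
        rw [Matrix.mulVec_zero]
        exact Submodule.zero_mem _
    | add x y hx hy ihx ihy =>
        rw [Matrix.mulVec_add]
        exact Submodule.add_mem _ ihx ihy
    | smul c x hx ihx =>
        have heq : A.mulVec (c • x) = c • A.mulVec x := by
          funext i
          simp only [Matrix.mulVec, dotProduct, Pi.smul_apply, hsmul, Finset.mul_sum]
          exact Finset.sum_congr rfl fun j _ => by ring
        rw [heq]
        exact Submodule.smul_mem _ _ ihx
  set u : PowerSeries k := PowerSeries.X ^ r with hudef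
  have hu0 : u ≠ 0 := pow_ne_zero _ PowerSeries.X_ne_zero
  have hιu0 : ι u ≠ 0 := by
    intro hh
    exact hu0 (hιinj (by simpa using hh))
  have huvan : ∀ d : ℤ, d < (r : ℤ) → (ι u).coeff d = 0 := by
    intro d hd
    rw [hιdef, show (HahnSeries.ofPowerSeries ℤ k) u = ((u : PowerSeries k) : LaurentSeries k)
      from rfl, PowerSeries.coeff_coe]
    split
    · rfl
    · rw [hudef, PowerSeries.coeff_X_pow, if_neg (by omega)]
  set T : Set (Fin n → PowerSeries k) := {w | ∃ v ∈ S, ψ w = u • v} with hTdef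
  set Λ' : Submodule (PowerSeries k) (Fin n → PowerSeries k) :=
    Submodule.span (PowerSeries k) T with hΛ'def
  have key1 : ∀ v ∈ Λ, ∃ y ∈ Λ', ψ y = u • v := by
    intro v hv
    induction hv using Submodule.span_induction with
    | mem x hx =>
        have hvan : ∀ l, ∀ d : ℤ, d < 0 → ((u • x) l).coeff d = 0 := by
          intro l d hd
          obtain ⟨m, hm, i, rfl⟩ := hx
          rw [Pi.smul_apply, hsmul]
          exact coeff_mul_eq_zero (a := (r : ℤ)) (b := s) huvan
            (fun dd hdd => hs m hm l i dd hdd) d (by omega)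
        choose w hw using fun l : Fin n => exists_powerSeries (fun d hd => hvan l d hd)
        have hψw : ψ w = u • x := by
          funext l
          rw [hψapp]
          exact hw l
        exact ⟨w, Submodule.subset_span ⟨x, hx, hψw⟩, hψw⟩
    | zero =>
        refine ⟨0, Submodule.zero_mem _, ?_⟩
        funext l
        rw [map_zero]
        simp [hVsmul]
    | add x y hx hy ihx ihy =>
        obtain ⟨y1, hy1, he1⟩ := ihx
        obtain ⟨y2, hy2, he2⟩ := ihy
        refine ⟨y1 + y2, Submodule.add_mem _ hy1 hy2, ?_⟩
        funext l
        rw [map_add]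
        have e1 := congrFun he1 l
        have e2 := congrFun he2 l
        rw [Pi.add_apply, e1, e2, hVsmul, hVsmul, hVsmul, Pi.add_apply]
        ring
    | smul c x hx ihx =>
        obtain ⟨y1, hy1, he1⟩ := ihx
        refine ⟨c • y1, Submodule.smul_mem _ _ hy1, ?_⟩
        funext l
        have e1 := congrFun he1 l
        rw [hψapp] at e1
        rw [hψapp, hOsmul, map_mul, e1, hVsmul, hVsmul, hVsmul]
        ring
  have key2 : ∀ y ∈ Λ', ∃ v ∈ Λ, ψ y = u • v := by
    intro y hy
    induction hy using Submodule.span_induction with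
    | mem w hw =>
        obtain ⟨v, hv, he⟩ := hw
        exact ⟨v, Submodule.subset_span hv, he⟩
    | zero =>
        refine ⟨0, Submodule.zero_mem _, ?_⟩
        funext l
        rw [map_zero]
        simp [hVsmul]
    | add x y hx hy ihx ihy =>
        obtain ⟨v1, hv1, he1⟩ := ihx
        obtain ⟨v2, hv2, he2⟩ := ihy
        refine ⟨v1 + v2, Submodule.add_mem _ hv1 hv2, ?_⟩
        funext l
        rw [map_add]
        have e1 := congrFun he1 l
        have e2 := congrFun he2 l
        rw [Pi.add_apply, e1, e2, hVsmul, hVsmul, hVsmul, Pi.add_apply]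
        ring
    | smul c x hx ihx =>
        obtain ⟨v1, hv1, he1⟩ := ihx
        refine ⟨c • v1, Submodule.smul_mem _ _ hv1, ?_⟩
        funext l
        have e1 := congrFun he1 l
        rw [hψapp] at e1
        rw [hψapp, hOsmul, map_mul, e1, hVsmul, hVsmul, hVsmul]
        ring
  obtain ⟨m', bN⟩ := Submodule.basisOfPid (Pi.basisFun (PowerSeries k) (Fin n)) Λ'
  have hle1 : m' ≤ n := by
    have hli : LinearIndependent (PowerSeries k) (fun i => (bN i : Fin n → PowerSeries k)) :=
      bN.linearIndependent.map' Λ'.subtype (Submodule.ker_subtype _)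
    have hcard := hli.fintype_card_le_finrank
    rw [Module.finrank_fintype_fun_eq_card] at hcard
    simpa using hcard
  have hwmemT : ∀ i : Fin n, (Pi.single i u : Fin n → PowerSeries k) ∈ T := by
    intro i
    refine ⟨(fun j => (A ^ 0) j i), ⟨0, by omega, i, rfl⟩, ?_⟩
    funext l
    rw [hψapp, Pi.smul_apply, hsmul]
    simp [Pi.single_apply, Matrix.one_apply, apply_ite ι, mul_ite]
  have hle2 : n ≤ m' := by
    have hwli : LinearIndependent (PowerSeries k)
        (fun i : Fin n => (Pi.single i u : Fin n → PowerSeries k)) := by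
      rw [Fintype.linearIndependent_iff]
      intro g hg i
      have h1 := congrFun hg i
      simp only [Finset.sum_apply, Pi.smul_apply, Pi.single_apply, smul_ite, smul_zero,
        smul_eq_mul, mul_ite, mul_zero, Finset.sum_ite_eq, Finset.mem_univ, if_true,
        Pi.zero_apply] at h1
      exact (mul_eq_zero.mp h1).resolve_right hu0
    have hmem : ∀ i : Fin n, (Pi.single i u : Fin n → PowerSeries k) ∈ Λ' :=
      fun i => Submodule.subset_span (hwmemT i)
    have hfin : Module.Finite (PowerSeries k) Λ' := Module.Finite.of_basis bN
    have hli2 : LinearIndependent (PowerSeries k)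
        (fun i : Fin n => (⟨Pi.single i u, hmem i⟩ : Λ')) := by
      apply LinearIndependent.of_comp Λ'.subtype
      exact hwli
    have hcard := hli2.fintype_card_le_finrank
    rw [Module.finrank_eq_card_basis bN] at hcard
    simpa using hcard
  have hm'n : m' = n := le_antisymm hle1 hle2
  set bB : Module.Basis (Fin n) (PowerSeries k) Λ' := bN.reindex (finCongr hm'n) with hbBdef
  set tinv : LaurentSeries k := (ι u)⁻¹ with htinvdef
  set Hm : Matrix (Fin n) (Fin n) (LaurentSeries k) :=
    Matrix.of (fun i j => tinv * ι ((bB j : Fin n → PowerSeries k) i)) with hHdef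
  have hcol : ∀ j, (fun i => Hm i j) = tinv • ψ (bB j : Fin n → PowerSeries k) := by
    intro j
    funext i
    rw [Pi.smul_apply, smul_eq_mul, hψapp]
    rfl
  have hcolΛ : ∀ j, (fun i => Hm i j) ∈ Λ := by
    intro j
    obtain ⟨v, hv, he⟩ := key2 _ (bB j).2
    rw [hcol j, he]
    have huv : u • v = (ι u) • v := by
      funext l
      rw [Pi.smul_apply, Pi.smul_apply, hsmul, smul_eq_mul]
    have hcan : tinv • (ι u) • v = v := by
      funext l
      rw [Pi.smul_apply, Pi.smul_apply, smul_eq_mul, smul_eq_mul, htinvdef, ← mul_assoc,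
        inv_mul_cancel₀ hιu0, one_mul]
    rw [huv, hcan]
    exact hv
  have hliO : LinearIndependent (PowerSeries k) (fun j => (bB j : Fin n → PowerSeries k)) :=
    bB.linearIndependent.map' Λ'.subtype (Submodule.ker_subtype _)
  have hliOV : LinearIndependent (PowerSeries k)
      (fun j => ψ (bB j : Fin n → PowerSeries k)) := by
    have := hliO.map' ψ (LinearMap.ker_eq_bot.mpr hψinj)
    exact this
  have hliF : LinearIndependent (LaurentSeries k)
      (fun j => ψ (bB j : Fin n → PowerSeries k)) :=
    hliOV.localization (LaurentSeries k) (nonZeroDivisors (PowerSeries k))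
  have hliCols : LinearIndependent (LaurentSeries k)
      (fun j : Fin n => (fun i => Hm i j)) := by
    have hun : tinv ≠ 0 := inv_ne_zero hιu0
    have h2 := hliF.units_smul (fun _ => Units.mk0 tinv hun)
    have h3 : (fun j : Fin n => (fun i => Hm i j)) =
        ((fun _ : Fin n => Units.mk0 tinv hun) • (fun j => ψ (bB j : Fin n → PowerSeries k))) := by
      funext j
      rw [hcol j]
      rfl
    rw [h3]
    exact h2
  have hUnit : IsUnit Hm := by
    apply Matrix.linearIndependent_cols_iff_isUnit.mp
    exact hliCols
  have hdet : IsUnit Hm.det := (Matrix.isUnit_iff_isUnit_det Hm).mp hUnit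
  have hinvmul : Hm⁻¹ * Hm = 1 := Matrix.nonsing_inv_mul Hm hdet
  have hmulinv : Hm * Hm⁻¹ = 1 := Matrix.mul_nonsing_inv Hm hdet
  have hmvInt : ∀ v ∈ Λ, ∀ l : Fin n, ∀ d : ℤ, d < 0 → ((Hm⁻¹.mulVec v) l).coeff d = 0 := by
    intro v hv l d hd
    obtain ⟨y, hy, he⟩ := key1 v hv
    set c : Fin n → PowerSeries k := fun j => bB.repr ⟨y, hy⟩ j with hcdef
    have hyrepr : ∑ j, c j • (bB j : Fin n → PowerSeries k) = y := by
      have h2 : ((∑ i : Fin n, (bB.repr ⟨y, hy⟩) i • bB i : Λ') : Fin n → PowerSeries k) = y :=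
        congrArg Subtype.val (bB.sum_repr ⟨y, hy⟩)
      rw [← h2]
      simp only [Submodule.coe_sum, Submodule.coe_smul, hcdef]
    have hveq : v = Hm.mulVec (fun j => ι (c j)) := by
      funext i
      have h3 : ι (y i) = ι u * v i := by
        have := congrFun he i
        rw [hψapp] at this
        rw [this, hVsmul]
      have h4 : v i = tinv * ι (y i) := by
        rw [h3, htinvdef, ← mul_assoc, inv_mul_cancel₀ hιu0, one_mul]
      rw [h4, ← hyrepr]
      simp only [Matrix.mulVec, dotProduct, Finset.sum_apply, hOsmul, map_sum, map_mul,
        Finset.mul_sum, hHdef, Matrix.of_apply]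
      exact Finset.sum_congr rfl fun j _ => by ring
    rw [hveq, Matrix.mulVec_mulVec, hinvmul, Matrix.one_mulVec]
    exact neg_coeff_coe _ hd
  have hentry : ∀ (i j : Fin n), (Hm⁻¹ * A * Hm) i j =
      (Hm⁻¹.mulVec (A.mulVec (fun l => Hm l j))) i := by
    intro i j
    rw [Matrix.mulVec_mulVec]
    simp [Matrix.mulVec, dotProduct, Matrix.mul_apply]
  have hBInt : ∀ i j, ∀ d : ℤ, d < 0 → ((Hm⁻¹ * A * Hm) i j).coeff d = 0 := by
    intro i j d hd
    rw [hentry i j]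
    exact hmvInt _ (hstab _ (hcolΛ j)) i d hd
  obtain ⟨s₁, hs₁0, hs₁⟩ := matrix_exists_bound Hm
  obtain ⟨s₂, hs₂0, hs₂⟩ := matrix_exists_bound (Hm⁻¹)
  obtain ⟨m₁, hm₁⟩ := h (1 - s₁ - s₂)
  have hconj : ∀ m : ℕ, (Hm⁻¹ * A * Hm) ^ m = Hm⁻¹ * A ^ m * Hm := by
    intro m
    induction m with
    | zero => rw [pow_zero, pow_zero, Matrix.mul_one, hinvmul]
    | succ m ih =>
        rw [pow_succ, ih, pow_succ]
        simp only [Matrix.mul_assoc]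
        rw [Matrix.mul_nonsing_inv_cancel_left Hm (A * Hm) hdet]
  refine ⟨Hm, hUnit, hBInt, ⟨m₁, ?_⟩⟩
  have hBm : ∀ i j, ∀ d : ℤ, d < 1 → (((Hm⁻¹ * A * Hm) ^ m₁) i j).coeff d = 0 := by
    intro i j d hd
    rw [hconj]
    have h1 := matmul_vanish (a := s₂) (b := 1 - s₁ - s₂) hs₂ (fun p q => hm₁ m₁ le_rfl p q)
    have h2 := matmul_vanish (a := s₂ + (1 - s₁ - s₂)) (b := s₁) h1 hs₁
    exact h2 i j d (by omega)
  rw [reduction_pow hBInt]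
  ext i j
  simp only [Matrix.map_apply, Matrix.zero_apply]
  exact hBm i j 0 (by omega)

end Lem21

/-- Lemma 2.1(iii) for the matrix algebra over `F = k((t))`: the powers of a matrix `A`
over the Laurent series field converge to `0` (entrywise, in the `t`-adic valuation)
iff some conjugate `g A g⁻¹` of `A` has entries in `k⟦t⟧` and nilpotent reduction
modulo `t`. Here "the entry has valuation at least `N`" is expressed by the vanishing
of its coefficients in degrees `< N`, and "lies in `k⟦t⟧`" by the vanishing of its
coefficients in negative degrees. -/
theorem topologically_nilpotent_iff_conjugate_integral_nilpotent_reduction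
    (k : Type*) [Field k] (n : ℕ) (hn : 0 < n)
    (A : Matrix (Fin n) (Fin n) (LaurentSeries k)) :
    (∀ N : ℤ, ∃ m₀ : ℕ, ∀ m : ℕ, m₀ ≤ m →
        ∀ i j : Fin n, ∀ d : ℤ, d < N → ((A ^ m) i j).coeff d = 0) ↔
      (∃ g : GL (Fin n) (LaurentSeries k),
        (∀ i j : Fin n, ∀ d : ℤ, d < 0 →
            (((g : Matrix (Fin n) (Fin n) (LaurentSeries k)) * A *
              ((g⁻¹ : GL (Fin n) (LaurentSeries k)) :
                Matrix (Fin n) (Fin n) (LaurentSeries k))) i j).coeff d = 0) ∧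
        IsNilpotent
          (((g : Matrix (Fin n) (Fin n) (LaurentSeries k)) * A *
            ((g⁻¹ : GL (Fin n) (LaurentSeries k)) :
              Matrix (Fin n) (Fin n) (LaurentSeries k))).map
            (fun x => x.coeff 0))) := by
  constructor
  · intro h
    obtain ⟨Hm, hUnit, hInt, hNil⟩ := Lem21.dir_ab hn A h
    have e1 : ((hUnit.unit⁻¹ : GL (Fin n) (LaurentSeries k)) :
        Matrix (Fin n) (Fin n) (LaurentSeries k)) = Hm⁻¹ := by
      rw [Matrix.coe_units_inv, hUnit.unit_spec]
    have e2 : (((hUnit.unit⁻¹ : GL (Fin n) (LaurentSeries k))⁻¹ :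
        GL (Fin n) (LaurentSeries k)) : Matrix (Fin n) (Fin n) (LaurentSeries k)) = Hm := by
      rw [inv_inv]
      exact hUnit.unit_spec
    refine ⟨hUnit.unit⁻¹, ?_, ?_⟩
    · rw [e1, e2]
      exact hInt
    · rw [e1, e2]
      exact hNil
  · rintro ⟨g, hInt, hNil⟩
    exact Lem21.dir_ba hn A _ _ g.mul_inv g.inv_mul hInt hNil
end

section
/- Let k be a field and 𝔤 a finite-dimensional Lie algebra over k equipped with a direct sum decomposition 𝔤 = ⊕_{(i,j) ∈ ℤ×ℤ} 𝔤_{(i,j)} into subspaces such that [𝔤_{(i,j)}, 𝔤_{(i',j')}] ⊆ 𝔤_{(i+i', j+j')} for all indices, and such that dim 𝔤_{(i,j)} = dim 𝔤_{(−i,−j)} for all (i,j). Let ē be an element of ⊕_{i≥2, j≥2} 𝔤_{(i,j)}, and let ē₂ denote the component of ē in ⊕_{i≥2} 𝔤_{(i,2)} (the part of second degree j = 2). Then the image of ⊕_{i∈ℤ} 𝔤_{(i,−1)} under ad(ē₂) satisfies the dimension bound: dim ad(ē₂)(⊕_{i} 𝔤_{(i,−1)}) ≤ 2·dim(⊕_{i≥2}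 𝔤_{(i,1)}) + dim 𝔤_{(1,1)}. -/
open Module

lemma aux_finrank_biSup {k L : Type*} [Field k] [AddCommGroup L] [Module k L]
    [Module.Finite k L] {ι : Type*} (f : ι → Submodule k L) (hind : iSupIndep f)
    (s : Finset ι) :
    finrank k (⨆ i ∈ s, f i : Submodule k L) = ∑ i ∈ s, finrank k (f i) := by
  classical
  induction s using Finset.induction_on with
  | empty => simp
  | @insert a t hat ih =>
    have hsup : (⨆ i ∈ insert a t, f i : Submodule k L) = f a ⊔ ⨆ i ∈ t, f i := by
      rw [Finset.insert_eq, Finset.iSup_union, Finset.iSup_singleton]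
    have hd : Disjoint (f a) (⨆ i ∈ t, f i : Submodule k L) :=
      hind.disjoint_biSup (y := ↑t) (by simpa using hat)
    have key := Submodule.finrank_sup_add_finrank_inf_eq (f a) (⨆ i ∈ t, f i)
    rw [hd.eq_bot] at key
    simp only [finrank_bot, add_zero] at key
    rw [hsup, Finset.sum_insert hat, key, ih]

/-- Inequality (7.9) ('last'): let `𝔤 = ⊕_{(i,j) ∈ ℤ×ℤ} 𝔤_{(i,j)}` be a bigraded
finite-dimensional Lie algebra with `dim 𝔤_{(i,j)} = dim 𝔤_{(-i,-j)}`, let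
`ē ∈ ⊕_{i≥2, j≥2} 𝔤_{(i,j)}` and let `ē₂` be the part of `ē` of second degree
`j = 2` (so that `ē - ē₂` has second degrees `j ≥ 3`). Then
`dim ad(ē₂)(⊕_i 𝔤_{(i,-1)}) ≤ 2·dim(⊕_{i≥2} 𝔤_{(i,1)}) + dim 𝔤_{(1,1)}`. -/
theorem bigraded_ad_image_dim_bound
    (k : Type*) [Field k] (L : Type*) [LieRing L] [LieAlgebra k L]
    [Module.Finite k L]
    (g : ℤ × ℤ → Submodule k L) (hdec : DirectSum.IsInternal g)
    (hbracket : ∀ p q : ℤ × ℤ, ∀ x ∈ g p, ∀ y ∈ g q, ⁅x, y⁆ ∈ g (p + q))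
    (hdim : ∀ p : ℤ × ℤ, Module.finrank k (g p) = Module.finrank k (g (-p)))
    (ebar e2 : L)
    (he : ebar ∈ ⨆ (p : ℤ × ℤ) (_ : 2 ≤ p.1 ∧ 2 ≤ p.2), g p)
    (he2 : e2 ∈ ⨆ (i : ℤ) (_ : 2 ≤ i), g (i, 2))
    (hrest : ebar - e2 ∈ ⨆ (p : ℤ × ℤ) (_ : 2 ≤ p.1 ∧ 3 ≤ p.2), g p) :
    Module.finrank k
        (Submodule.map (LieAlgebra.ad k L e2) (⨆ i : ℤ, g (i, -1))) ≤
      2 * Module.finrank k ((⨆ (i : ℤ) (_ : 2 ≤ i), g (i, 1) : Submodule k L)) +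
        Module.finrank k (g (1, 1)) := by
  classical
  have hind : iSupIndep g := hdec.submodule_iSupIndep
  have hind1 : iSupIndep (fun i : ℤ => g (i, 1)) :=
    hind.comp (f := fun i : ℤ => ((i, 1) : ℤ × ℤ)) (fun a b h => by simpa using h)
  have hindm : iSupIndep (fun i : ℤ => g (i, -1)) :=
    hind.comp (f := fun i : ℤ => ((i, -1) : ℤ × ℤ)) (fun a b h => by simpa using h)
  have hfin1 : {i : ℤ | g (i, 1) ≠ ⊥}.Finite := by
    exact Set.finite_coe_iff.mp (@Finite.of_fintype _ hind1.fintypeNeBotOfFiniteDimensional)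
  have hfinm : {i : ℤ | g (i, -1) ≠ ⊥}.Finite := by
    exact Set.finite_coe_iff.mp (@Finite.of_fintype _ hindm.fintypeNeBotOfFiniteDimensional)
  set S : Finset ℤ := hfin1.toFinset ∪ hfinm.toFinset with hS
  set F : Finset ℤ := S ∪ S.image (fun i => -i) with hF
  have hFneg : ∀ i ∈ F, -i ∈ F := by
    intro i hi
    rw [hF, Finset.mem_union] at hi ⊢
    rcases hi with hi | hi
    · exact Or.inr (Finset.mem_image.mpr ⟨i, hi, rfl⟩)
    · rcases Finset.mem_image.mp hi with ⟨j, hj, rfl⟩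
      simpa using Or.inl hj
  have hsupp1 : ∀ i : ℤ, g (i, 1) ≠ ⊥ → i ∈ F := by
    intro i hi
    exact Finset.mem_union_left _ (Finset.mem_union_left _ (hfin1.mem_toFinset.mpr hi))
  have hsuppm : ∀ i : ℤ, g (i, -1) ≠ ⊥ → i ∈ F := by
    intro i hi
    exact Finset.mem_union_left _ (Finset.mem_union_right _ (hfinm.mem_toFinset.mpr hi))
  set A : Submodule k L := ⨆ (i : ℤ) (_ : i ≤ -2), g (i, -1) with hA
  set B : Submodule k L := ⨆ (i : ℤ) (_ : -1 ≤ i), g (i, -1) with hB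
  set W : Submodule k L := ⨆ (i : ℤ) (_ : 2 ≤ i), g (i, 1) with hW
  set C : Submodule k L := g (1, 1) ⊔ W with hC
  -- A and W as finite sups
  have hAeq : A = ⨆ i ∈ F.filter (fun i => i ≤ -2), g (i, -1) := by
    apply le_antisymm
    · refine iSup₂_le fun i hi => ?_
      by_cases hbot : g (i, -1) = ⊥
      · rw [hbot]; exact bot_le
      · exact le_iSup₂ (f := fun i (_ : i ∈ F.filter (fun i => i ≤ -2)) => g (i, -1)) i
          (Finset.mem_filter.mpr ⟨hsuppm i hbot, hi⟩)
    · refine iSup₂_le fun i hi => ?_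
      exact le_iSup₂ (f := fun i (_ : i ≤ -2) => g (i, -1)) i (Finset.mem_filter.mp hi).2
  have hWeq : W = ⨆ i ∈ F.filter (fun i => 2 ≤ i), g (i, 1) := by
    apply le_antisymm
    · refine iSup₂_le fun i hi => ?_
      by_cases hbot : g (i, 1) = ⊥
      · rw [hbot]; exact bot_le
      · exact le_iSup₂ (f := fun i (_ : i ∈ F.filter (fun i => 2 ≤ i)) => g (i, 1)) i
          (Finset.mem_filter.mpr ⟨hsupp1 i hbot, hi⟩)
    · refine iSup₂_le fun i hi => ?_
      exact le_iSup₂ (f := fun i (_ : 2 ≤ i) => g (i, 1)) i (Finset.mem_filter.mp hi).2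
  -- dim A = dim W
  have hAW : Module.finrank k A = Module.finrank k W := by
    rw [hAeq, hWeq, aux_finrank_biSup _ hindm, aux_finrank_biSup _ hind1]
    refine Finset.sum_nbij' (fun i => -i) (fun i => -i) ?_ ?_ ?_ ?_ ?_
    · intro a ha
      rcases Finset.mem_filter.mp ha with ⟨haF, ha2⟩
      exact Finset.mem_filter.mpr ⟨hFneg a haF, by show (2:ℤ) ≤ -a; omega⟩
    · intro a ha
      rcases Finset.mem_filter.mp ha with ⟨haF, ha2⟩
      exact Finset.mem_filter.mpr ⟨hFneg a haF, by show -a ≤ (-2:ℤ); omega⟩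
    · intro a _; ring
    · intro a _; ring
    · intro a _
      have := hdim (a, -1)
      simpa using this
  -- total domain split
  have hsplit : (⨆ i : ℤ, g (i, -1)) ≤ A ⊔ B := by
    refine iSup_le fun i => ?_
    rcases le_or_gt i (-2) with h | h
    · exact le_trans (le_iSup₂ (f := fun i (_ : i ≤ -2) => g (i, -1)) i h) le_sup_left
    · exact le_trans (le_iSup₂ (f := fun i (_ : (-1:ℤ) ≤ i) => g (i, -1)) i (by omega))
        le_sup_right
  -- bracket with e2 sends B into C
  have key : ∀ x, x ∈ (⨆ i : {i : ℤ // 2 ≤ i}, g (i.1, 2) : Submodule k L) →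
      ∀ y, y ∈ (⨆ i : {i : ℤ // -1 ≤ i}, g (i.1, -1) : Submodule k L) → ⁅x, y⁆ ∈ C := by
    intro x hx
    refine Submodule.iSup_induction (motive := fun x => ∀ y,
        y ∈ (⨆ i : {i : ℤ // -1 ≤ i}, g (i.1, -1) : Submodule k L) → ⁅x, y⁆ ∈ C) _ hx ?_ ?_ ?_
    · intro i x hxi y hy
      refine Submodule.iSup_induction (motive := fun y => ⁅x, y⁆ ∈ C) _ hy ?_ ?_ ?_
      · intro i' y hyi
        have hmem : ⁅x, y⁆ ∈ g ((i : ℤ) + (i' : ℤ), 1) := by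
          have := hbracket (↑i, 2) (↑i', -1) x hxi y hyi
          have heq : ((i : ℤ), (2:ℤ)) + ((i' : ℤ), (-1:ℤ)) = ((i : ℤ) + (i' : ℤ), 1) := by
            simp [Prod.ext_iff]
          rwa [heq] at this
        rcases eq_or_lt_of_le (show (1:ℤ) ≤ (i : ℤ) + (i' : ℤ) by
          have h2 := i.2; have h2' := i'.2; omega) with h1 | h1
        · rw [hC]
          exact Submodule.mem_sup_left (by rwa [← h1] at hmem)
        · refine Submodule.mem_sup_right ?_
          exact le_iSup₂ (f := fun j (_ : (2:ℤ) ≤ j) => g (j, 1)) ((i:ℤ) + (i':ℤ))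
            (by omega) hmem
      · show ⁅x, (0:L)⁆ ∈ C
        rw [lie_zero]; exact C.zero_mem
      · intro y₁ y₂ h₁ h₂
        show ⁅x, y₁ + y₂⁆ ∈ C
        rw [lie_add]; exact C.add_mem h₁ h₂
    · intro y _
      show ⁅(0:L), y⁆ ∈ C
      rw [zero_lie]; exact C.zero_mem
    · intro x₁ x₂ h₁ h₂ y hy
      show ⁅x₁ + x₂, y⁆ ∈ C
      rw [add_lie]; exact C.add_mem (h₁ y hy) (h₂ y hy)
  have hbr : ∀ y ∈ B, ⁅e2, y⁆ ∈ C := by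
    intro y hy
    rw [iSup_subtype'] at he2
    rw [hB, iSup_subtype'] at hy
    exact key e2 he2 y hy
  have hmapB : Submodule.map (LieAlgebra.ad k L e2) B ≤ C := by
    rintro _ ⟨y, hy, rfl⟩
    exact hbr y hy
  -- assemble
  have hmap : Submodule.map (LieAlgebra.ad k L e2) (⨆ i : ℤ, g (i, -1)) ≤
      Submodule.map (LieAlgebra.ad k L e2) A ⊔ Submodule.map (LieAlgebra.ad k L e2) B := by
    rw [← Submodule.map_sup]
    exact Submodule.map_mono hsplit
  have h1 : Module.finrank k (Submodule.map (LieAlgebra.ad k L e2) (⨆ i : ℤ, g (i, -1))) ≤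
      Module.finrank k ((Submodule.map (LieAlgebra.ad k L e2) A ⊔
        Submodule.map (LieAlgebra.ad k L e2) B : Submodule k L)) :=
    Submodule.finrank_mono hmap
  have h2 := Submodule.finrank_add_le_finrank_add_finrank
    (Submodule.map (LieAlgebra.ad k L e2) A) (Submodule.map (LieAlgebra.ad k L e2) B)
  have h3 : Module.finrank k (Submodule.map (LieAlgebra.ad k L e2) A) ≤ Module.finrank k A :=
    Submodule.finrank_map_le _ _
  have h4 : Module.finrank k (Submodule.map (LieAlgebra.ad k L e2) B) ≤ Module.finrank k C :=
    Submodule.finrank_mono hmapB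
  have h5 : Module.finrank k C ≤ Module.finrank k (g (1, 1)) + Module.finrank k W :=
    Submodule.finrank_add_le_finrank_add_finrank _ _
  omega
end

section
/- Let ι be a type, l a filter on ι, and q : ι → ℝ a function tending to +∞ along l. Fix an integer n ≥ 1 and a real constant c. Suppose M : ι → Matrix (Fin n) (Fin n) ℝ is a family of lower-triangular matrices with all diagonal entries equal to 1 (i.e. M_i(a,b) = 0 whenever b > a, and M_i(a,a) = 1) such that for every pair of indices (a,b) the function i ↦ M_i(a,b) is O(1) along l. Suppose v, w : ι → (Fin n → ℝ) are families of vectors such that: v_i(0) = c for all i; for every index a ≠ 0 the function i ↦ v_i(a) is O(q(i)^{−1/2}) along l; the function i ↦ w_i(0) − 1 is O(q(i)^{−1/2}) along l; and for every index a the function i ↦ w_i(a) is O(1) along l. Then the function i ↦ v_i ⬝ (M_i⁻¹ · w_i) − c (the dot product of the row vector v_i with the matrix-vector product M_i⁻¹ w_i, minus c) is O(q(i)^{−1/2}) along l. -/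
open Asymptotics Filter Matrix

lemma abs_det_le_aux {m : ℕ} (A : Matrix (Fin m) (Fin m) ℝ) {C : ℝ}
    (h : ∀ a b, |A a b| ≤ C) : |A.det| ≤ m.factorial * C ^ m := by
  rw [Matrix.det_apply']
  calc |∑ σ : Equiv.Perm (Fin m), ((Equiv.Perm.sign σ : ℤ) : ℝ) * ∏ i, A (σ i) i|
      ≤ ∑ σ : Equiv.Perm (Fin m), |((Equiv.Perm.sign σ : ℤ) : ℝ) * ∏ i, A (σ i) i| :=
        Finset.abs_sum_le_sum_abs _ _
    _ ≤ ∑ _σ : Equiv.Perm (Fin m), C ^ m := by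
        refine Finset.sum_le_sum fun σ _ => ?_
        rw [abs_mul]
        have hsign : |((Equiv.Perm.sign σ : ℤ) : ℝ)| = 1 := by
          rcases Int.units_eq_one_or (Equiv.Perm.sign σ) with h1 | h1 <;> simp [h1]
        rw [hsign, one_mul, Finset.abs_prod]
        calc ∏ i, |A (σ i) i| ≤ ∏ _i : Fin m, C :=
              Finset.prod_le_prod (fun _ _ => abs_nonneg _) (fun i _ => h _ _)
          _ = C ^ m := by simp
    _ = m.factorial * C ^ m := by
        simp [Finset.sum_const, Fintype.card_perm]

/-- The asymptotic linear algebra behind the deduction of the main estimate from the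
Shalika germ expansion: if `M i` is a family of lower-triangular matrices with `1`'s
on the diagonal and `O(1)` entries, `v i` is a family of row vectors with first entry
exactly `c` and remaining entries `O(q⁻¹ᐟ²)`, and `w i` is a family of column vectors
with first entry `1 + O(q⁻¹ᐟ²)` and all entries `O(1)`, then
`v i ⬝ (M i)⁻¹ (w i) = c + O(q⁻¹ᐟ²)` as `q → ∞`. -/
theorem shalika_germ_asymptotic_linear_algebra
    {ι : Type*} (l : Filter ι) (q : ι → ℝ) (hq : Tendsto q l atTop)
    (n : ℕ) (hn : 1 ≤ n) (c : ℝ)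
    (M : ι → Matrix (Fin n) (Fin n) ℝ)
    (hM_tri : ∀ i, ∀ a b : Fin n, a < b → M i a b = 0)
    (hM_diag : ∀ i, ∀ a : Fin n, M i a a = 1)
    (hM_O : ∀ a b : Fin n, (fun i => M i a b) =O[l] (fun _ => (1 : ℝ)))
    (v w : ι → (Fin n → ℝ))
    (hv0 : ∀ i, v i ⟨0, hn⟩ = c)
    (hv : ∀ a : Fin n, a ≠ ⟨0, hn⟩ →
      (fun i => v i a) =O[l] (fun i => (q i) ^ (-(1 : ℝ) / 2)))
    (hw0 : (fun i => w i ⟨0, hn⟩ - 1) =O[l] (fun i => (q i) ^ (-(1 : ℝ) / 2)))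
    (hw : ∀ a : Fin n, (fun i => w i a) =O[l] (fun _ => (1 : ℝ))) :
    (fun i => v i ⬝ᵥ ((M i)⁻¹ *ᵥ w i) - c) =O[l]
      (fun i => (q i) ^ (-(1 : ℝ) / 2)) := by
  set z : Fin n := ⟨0, hn⟩ with hz
  -- triangularity as BlockTriangular
  have htri : ∀ i, (M i).BlockTriangular OrderDual.toDual := by
    intro i a b hab
    exact hM_tri i a b hab
  -- determinant is 1
  have hdet : ∀ i, (M i).det = 1 := by
    intro i
    rw [Matrix.det_of_lowerTriangular (M i) (htri i)]
    simp [hM_diag i]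
  have hdet_unit : ∀ i, IsUnit (M i).det := fun i => by rw [hdet i]; exact isUnit_one
  -- inverse is triangular
  have hinv_tri : ∀ i, ∀ a b : Fin n, a < b → (M i)⁻¹ a b = 0 := by
    intro i a b hab
    haveI : Invertible (M i) := (M i).invertibleOfIsUnitDet (hdet_unit i)
    exact Matrix.blockTriangular_inv_of_blockTriangular (htri i) hab
  have hinvMul : ∀ i, (M i)⁻¹ * M i = 1 := fun i => Matrix.nonsing_inv_mul _ (hdet_unit i)
  have hz_lt : ∀ k : Fin n, k ≠ z → z < k := by
    intro k hk
    rw [Fin.lt_def]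
    have : k.val ≠ 0 := fun h => hk (Fin.ext h)
    simp only [hz]
    omega
  -- (M i)⁻¹ z z = 1
  have hinv00 : ∀ i, (M i)⁻¹ z z = 1 := by
    intro i
    have h1 : ((M i)⁻¹ * M i) z z = 1 := by rw [hinvMul i]; simp
    rw [Matrix.mul_apply, Finset.sum_eq_single z] at h1
    · rw [hM_diag i z, mul_one] at h1; exact h1
    · intro k _ hk
      rw [hinv_tri i z k (hz_lt k hk), zero_mul]
    · intro h; exact absurd (Finset.mem_univ z) h
  -- row z of (M i)⁻¹ *ᵥ w i
  have hrow0 : ∀ i, ((M i)⁻¹ *ᵥ w i) z = w i z := by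
    intro i
    show ∑ b, (M i)⁻¹ z b * w i b = w i z
    rw [Finset.sum_eq_single z]
    · rw [hinv00 i, one_mul]
    · intro k _ hk
      rw [hinv_tri i z k (hz_lt k hk), zero_mul]
    · intro h; exact absurd (Finset.mem_univ z) h
  -- uniform eventual bound on entries of M i
  obtain ⟨B, hB0, hBev⟩ : ∃ B : ℝ, 0 ≤ B ∧ ∀ᶠ i in l, ∀ a b : Fin n, |M i a b| ≤ B := by
    have h1 : ∀ a b : Fin n, ∃ C : ℝ, ∀ᶠ i in l, |M i a b| ≤ C := by
      intro a b
      obtain ⟨C, hC⟩ := (hM_O a b).bound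
      exact ⟨C, hC.mono fun i hi => by simpa using hi⟩
    choose C hC using h1
    refine ⟨∑ a : Fin n, ∑ b : Fin n, max (C a b) 0, ?_, ?_⟩
    · exact Finset.sum_nonneg fun a _ => Finset.sum_nonneg fun b _ => le_max_right _ _
    · have hev : ∀ᶠ i in l, ∀ a b : Fin n, |M i a b| ≤ C a b :=
        eventually_all.2 fun a => eventually_all.2 fun b => hC a b
      refine hev.mono fun i hi a b => ?_
      refine (hi a b).trans (le_trans (le_max_left (C a b) 0) ?_)
      calc max (C a b) 0 ≤ ∑ b' : Fin n, max (C a b') 0 :=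
            Finset.single_le_sum (f := fun b' => max (C a b') 0) (fun b' _ => le_max_right _ _) (Finset.mem_univ b)
        _ ≤ ∑ a' : Fin n, ∑ b' : Fin n, max (C a' b') 0 :=
            Finset.single_le_sum (f := fun a' => ∑ b' : Fin n, max (C a' b') 0)
              (fun a' _ => Finset.sum_nonneg fun b' _ => le_max_right _ _)
              (Finset.mem_univ a)
  -- entries of inverse are O(1)
  have hinvO : ∀ a b : Fin n, (fun i => (M i)⁻¹ a b) =O[l] (fun _ => (1 : ℝ)) := by
    intro a b
    refine IsBigO.of_bound (n.factorial * (max B 1) ^ n) (hBev.mono fun i hi => ?_)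
    have hinv_eq : (M i)⁻¹ = (M i).adjugate := by
      rw [Matrix.inv_def, hdet i]
      simp
    rw [norm_one, mul_one]
    rw [hinv_eq, Matrix.adjugate_apply]
    have hbound : ∀ a' b' : Fin n, |(M i).updateRow b (Pi.single a 1) a' b'| ≤ max B 1 := by
      intro a' b'
      rw [Matrix.updateRow_apply]
      split
      · rw [Pi.single_apply]
        split <;> simp
      · exact (hi a' b').trans (le_max_left _ _)
    simpa using abs_det_le_aux _ hbound
  -- (M i)⁻¹ *ᵥ w i entries are O(1)
  have uO : ∀ a : Fin n, (fun i => ((M i)⁻¹ *ᵥ w i) a) =O[l] (fun _ => (1 : ℝ)) := by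
    intro a
    have : (fun i => ((M i)⁻¹ *ᵥ w i) a) = fun i => ∑ b, (M i)⁻¹ a b * w i b := rfl
    rw [this]
    refine IsBigO.fun_sum fun b _ => ?_
    simpa using (hinvO a b).mul (hw b)
  -- main decomposition
  have key : ∀ i, v i ⬝ᵥ ((M i)⁻¹ *ᵥ w i) - c =
      c * (w i z - 1) + ∑ a ∈ Finset.univ.erase z, v i a * ((M i)⁻¹ *ᵥ w i) a := by
    intro i
    have hsplit : v i ⬝ᵥ ((M i)⁻¹ *ᵥ w i) =
        v i z * ((M i)⁻¹ *ᵥ w i) z + ∑ a ∈ Finset.univ.erase z, v i a * ((M i)⁻¹ *ᵥ w i) a := by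
      rw [dotProduct]
      exact (Finset.add_sum_erase _ _ (Finset.mem_univ z)).symm
    rw [hsplit, hv0 i, hrow0 i]
    ring
  rw [show (fun i => v i ⬝ᵥ ((M i)⁻¹ *ᵥ w i) - c) =
      (fun i => c * (w i z - 1) + ∑ a ∈ Finset.univ.erase z, v i a * ((M i)⁻¹ *ᵥ w i) a)
      from funext key]
  refine IsBigO.add ?_ ?_
  · exact hw0.const_mul_left c
  · refine IsBigO.fun_sum fun a ha => ?_
    have hane : a ≠ z := (Finset.mem_erase.1 ha).1
    simpa using (hv a hane).mul (uO a)
end
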